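/- Let Γ, Q⁰ ∈ ℚ[[x₁,x₂,y₁,y₂]], set δ₁ := Γ_{x₂} and δ₂ := 0, and assume for each i ∈ {1,2}: (i) Q⁰_{x_i x_i} = −2δ_i − 2Γ_{y_i x_i} − B((Γ_{x₁},Γ_{x₂}),(Γ_{x₁x_ix_i},Γ_{x₂x_ix_i})), and (ii) 2Γ_{y_i x_i} + 2δ_i = B((Γ_{x₁x_i},Γ_{x₂x_i}),(Γ_{x₁x_i},Γ_{x₂x_i})). Then for each i ∈ {1,2}: ∂²/∂x_i² ( Q⁰ + (1/2)·B((Γ_{x₁},Γ_{x₂}),(Γ_{x₁},Γ_{x₂})) ) = 0. (This is Corollary 2.4 of the paper: granting the k=0 case of the Q-potential equation after the dilaton equation, together with the integrated topological recursion relation, the potential Q⁰ equals −(1/2) Σ_{e,f} Γ_{x_e} γ^{ef} Γ_{x_f} up to terms of degree ≤ 1 in each x_i.) -/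

import Mathlib

/-- Formal partial derivative of a multivariate power series with respect to the `i`-th
variable: the coefficient at a monomial `m` is `(m i + 1)` times the coefficient at
`m + eᵢ`. -/
noncomputable def pd {n : ℕ} (i : Fin n) (F : MvPowerSeries (Fin n) ℚ) :
    MvPowerSeries (Fin n) ℚ :=
  fun m => ((m i : ℚ) + 1) * MvPowerSeries.coeff (m + Finsupp.single i 1) F

/-- The deformed-metric pairing of `ℙ²` on pairs of power series in `ℚ[[x₁,x₂,y₁,y₂]]`
(variables `x₁,x₂,y₁,y₂ = 0,1,2,3`):
`B((a₁,a₂),(b₁,b₂)) = a₁b₁ + 2y₁(a₁b₂ + a₂b₁) + (2y₁²+2y₂)a₂b₂`. -/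
noncomputable def Bform
    (a b : MvPowerSeries (Fin 4) ℚ × MvPowerSeries (Fin 4) ℚ) :
    MvPowerSeries (Fin 4) ℚ :=
  a.1 * b.1 + 2 * MvPowerSeries.X 2 * (a.1 * b.2 + a.2 * b.1) +
    (2 * MvPowerSeries.X 2 ^ 2 + 2 * MvPowerSeries.X 3) * (a.2 * b.2)

/-- The variable `x_i` for `i ∈ {1,2}` is the variable of index `0` resp. `1`. -/
def xv : Fin 2 → Fin 4 := ![0, 1]

/-- The variable `y_i` for `i ∈ {1,2}` is the variable of index `2` resp. `3`. -/
def yv : Fin 2 → Fin 4 := ![2, 3]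

/-!
The pairing `B` has coefficients depending only on `y₁, y₂`, so each `∂/∂x_i` acts on it by the
Leibniz rule in both arguments. Hence `∂²_{x_i} ½B(∇Γ, ∇Γ) = B(∇Γ, ∂²_{x_i}∇Γ) + B(∂_{x_i}∇Γ, ∂_{x_i}∇Γ)`,
and adding (i) and then using (ii) leaves `−2δ_i − 2Γ_{y_i x_i} + (2Γ_{y_i x_i} + 2δ_i) = 0`.
-/

open MvPowerSeries

theorem pd_eq_pderiv {n : ℕ} (i : Fin n) : pd i = pderiv ℚ i := by
  funext F
  ext m
  rw [coeff_pderiv, mul_comm]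
  rfl

theorem Bform_comm (a b : MvPowerSeries (Fin 4) ℚ × MvPowerSeries (Fin 4) ℚ) :
    Bform a b = Bform b a := by
  unfold Bform
  ring

section Derivation

variable (D : Derivation ℚ (MvPowerSeries (Fin 4) ℚ) (MvPowerSeries (Fin 4) ℚ))

theorem Derivation.map_Bform (hy₁ : D (X 2) = 0) (hy₂ : D (X 3) = 0)
    (a b : MvPowerSeries (Fin 4) ℚ × MvPowerSeries (Fin 4) ℚ) :
    D (Bform a b) = Bform (D a.1, D a.2) b + Bform a (D b.1, D b.2) := by
  have h2 : D (2 : MvPowerSeries (Fin 4) ℚ) = 0 := D.map_natCast 2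
  simp only [Bform, pow_two, map_add, Derivation.leibniz, hy₁, hy₂, h2, smul_eq_mul]
  ring

theorem Derivation.map_map_Bform_self (hy₁ : D (X 2) = 0) (hy₂ : D (X 3) = 0)
    (a : MvPowerSeries (Fin 4) ℚ × MvPowerSeries (Fin 4) ℚ) :
    D (D (Bform a a)) =
      2 * (Bform a (D (D a.1), D (D a.2)) + Bform (D a.1, D a.2) (D a.1, D a.2)) := by
  simp only [D.map_Bform hy₁ hy₂, map_add]
  rw [Bform_comm (D (D a.1), D (D a.2)) a]
  ring

end Derivation

theorem Q0_potential_P2_general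
    (Γ Q0 : MvPowerSeries (Fin 4) ℚ)
    (δ : Fin 2 → MvPowerSeries (Fin 4) ℚ)
    (h1 : ∀ i : Fin 2,
      pd (xv i) (pd (xv i) Q0) =
        -2 * δ i - 2 * pd (xv i) (pd (yv i) Γ) -
          Bform (pd 0 Γ, pd 1 Γ)
            (pd (xv i) (pd (xv i) (pd 0 Γ)), pd (xv i) (pd (xv i) (pd 1 Γ))))
    (h2 : ∀ i : Fin 2,
      2 * pd (xv i) (pd (yv i) Γ) + 2 * δ i =
        Bform (pd (xv i) (pd 0 Γ), pd (xv i) (pd 1 Γ))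
          (pd (xv i) (pd 0 Γ), pd (xv i) (pd 1 Γ))) :
    ∀ i : Fin 2,
      pd (xv i) (pd (xv i)
        (Q0 + MvPowerSeries.C (1 / 2 : ℚ) *
          Bform (pd 0 Γ, pd 1 Γ) (pd 0 Γ, pd 1 Γ))) = 0 := by
  intro i
  have hy₁ : pderiv ℚ (xv i) (X 2) = 0 := pderiv_X_of_ne (by fin_cases i <;> decide)
  have hy₂ : pderiv ℚ (xv i) (X 3) = 0 := pderiv_X_of_ne (by fin_cases i <;> decide)
  have hB := (pderiv ℚ (xv i)).map_map_Bform_self hy₁ hy₂ (pd 0 Γ, pd 1 Γ)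
  have h1i := h1 i
  have h2i := h2 i
  simp only [pd_eq_pderiv] at h1i h2i hB ⊢
  rw [map_add, map_add, ← smul_eq_C_mul, Derivation.map_smul, Derivation.map_smul, hB, h1i]
  have half_smul_two_mul (S : MvPowerSeries (Fin 4) ℚ) : (1 / 2 : ℚ) • (2 * S) = S := by
    rw [two_mul, smul_add, ← add_smul]
    norm_num
  rw [half_smul_two_mul]
  linear_combination -h2i

/-- Let `Γ, Q⁰ ∈ ℚ[[x₁,x₂,y₁,y₂]]`, set `δ₁ = Γ_{x₂}`, `δ₂ = 0`, and assume for
each `i ∈ {1,2}`: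
(i) `Q⁰_{x_i x_i} = −2δ_i − 2Γ_{y_i x_i} − B((Γ_{x₁},Γ_{x₂}),(Γ_{x₁x_ix_i},Γ_{x₂x_ix_i}))`, and
(ii) `2Γ_{y_i x_i} + 2δ_i = B((Γ_{x₁x_i},Γ_{x₂x_i}),(Γ_{x₁x_i},Γ_{x₂x_i}))`.
Then for each `i ∈ {1,2}`:
`∂²/∂x_i² (Q⁰ + (1/2)B((Γ_{x₁},Γ_{x₂}),(Γ_{x₁},Γ_{x₂}))) = 0`.
This is Corollary 2.4 of the paper. -/
theorem Q0_potential_P2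
    (Γ Q0 : MvPowerSeries (Fin 4) ℚ)
    (δ : Fin 2 → MvPowerSeries (Fin 4) ℚ)
    (hδ : δ = ![pd 1 Γ, 0])
    (h1 : ∀ i : Fin 2,
      pd (xv i) (pd (xv i) Q0) =
        -2 * δ i - 2 * pd (xv i) (pd (yv i) Γ) -
          Bform (pd 0 Γ, pd 1 Γ)
            (pd (xv i) (pd (xv i) (pd 0 Γ)), pd (xv i) (pd (xv i) (pd 1 Γ))))
    (h2 : ∀ i : Fin 2,
      2 * pd (xv i) (pd (yv i) Γ) + 2 * δ i =
        Bform (pd (xv i) (pd 0 Γ), pd (xv i) (pd 1 Γ))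
          (pd (xv i) (pd 0 Γ), pd (xv i) (pd 1 Γ))) :
    ∀ i : Fin 2,
      pd (xv i) (pd (xv i)
        (Q0 + MvPowerSeries.C (1 / 2 : ℚ) *
          Bform (pd 0 Γ, pd 1 Γ) (pd 0 Γ, pd 1 Γ))) = 0 :=
  Q0_potential_P2_general Γ Q0 δ h1 h2
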